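/- arXiv:2406.10131 — 2 statements merged into one kernel-verified Lean document; each statement's English description precedes it below -/
import Mathlib

section
/- Loewner sandwich between a block matrix and its block-diagonal part (Lemma D.6): Let V ∈ ℝ^{d₁×d₁} and W ∈ ℝ^{d₂×d₂} be symmetric positive definite and B ∈ ℝ^{d₁×d₂} satisfy ‖V^{−1/2} B W^{−1/2}‖ ≤ 1/2 in operator norm. Let M = [[V, B],[Bᵀ, W]] and U = blockdiag(V, W). Then (1/2)·U ≼ M ≼ 2·U in the Loewner (positive semidefinite) order. -/
/-!
With `S = √V`, `T = √W` and `Z = S⁻¹ B T⁻¹`, the matrix `[[c V, B], [Bᵀ, c W]]` is the congruence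
of `[[c I, Z], [Zᵀ, c I]]` by `blockdiag(S, T)`. The latter is positive semidefinite as soon as
`‖Z‖ ≤ c`, because its quadratic form is `c‖a‖² + 2⟨a, Z b⟩ + c‖b‖² ≥ c (‖a‖ - ‖b‖)²`.
Now `M - U/2` is the case `c = 1/2`, and `2U - M` is the case `c = 1` with `B` replaced by `-B`.
-/

open Matrix

noncomputable section

/-- Operator norm (largest singular value) of a real matrix. -/
def opNorm {m n : Type*} [Fintype m] [Fintype n] [DecidableEq n] (A : Matrix m n ℝ) : ℝ :=
  ‖LinearMap.toContinuousLinearMap (Matrix.toEuclideanLin A)‖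

/-- `invSqrt A` is `A^{-1/2}` for positive (semi)definite `A` (junk value `0` otherwise). -/
def invSqrt {n : Type*} [Fintype n] [DecidableEq n] (A : Matrix n n ℝ) : Matrix n n ℝ :=
  haveI := Classical.dec A.PosSemidef
  if h : A.PosSemidef then
    ((h.1.eigenvectorUnitary : Matrix n n ℝ) * diagonal ((↑) ∘ (√·) ∘ h.1.eigenvalues) *
      (star h.1.eigenvectorUnitary : Matrix n n ℝ))⁻¹ else 0

open WithLp

section OpNorm

variable {m n : Type*} [Fintype m] [Fintype n] [DecidableEq n]

lemma opNorm_nonneg (A : Matrix m n ℝ) : 0 ≤ opNorm A := norm_nonneg _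

lemma opNorm_neg (A : Matrix m n ℝ) : opNorm (-A) = opNorm A := by
  rw [opNorm, map_neg, map_neg, norm_neg, opNorm]

lemma abs_dotProduct_mulVec_le_opNorm (A : Matrix m n ℝ) (a : m → ℝ) (b : n → ℝ) :
    |a ⬝ᵥ A *ᵥ b| ≤ opNorm A * ‖toLp 2 a‖ * ‖toLp 2 b‖ := by
  have hinner : a ⬝ᵥ A *ᵥ b = inner ℝ (toLp 2 a) (toEuclideanLin A (toLp 2 b)) := by
    rw [dotProduct_comm]
    rfl
  calc |a ⬝ᵥ A *ᵥ b| ≤ ‖toLp 2 a‖ * ‖toEuclideanLin A (toLp 2 b)‖ :=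
        hinner ▸ abs_real_inner_le_norm _ _
    _ ≤ ‖toLp 2 a‖ * (opNorm A * ‖toLp 2 b‖) := by
        gcongr
        exact (toEuclideanLin A).toContinuousLinearMap.le_opNorm _
    _ = opNorm A * ‖toLp 2 a‖ * ‖toLp 2 b‖ := by ring

end OpNorm

lemma dotProduct_self_eq_norm_toLp_sq {n : Type*} [Fintype n] (a : n → ℝ) :
    a ⬝ᵥ a = ‖toLp 2 a‖ ^ 2 := by
  rw [← real_inner_self_eq_norm_sq, EuclideanSpace.inner_toLp_toLp, star_trivial]

lemma sumElim_dotProduct_fromBlocks_mulVec_sumElim {m n R : Type*} [Fintype m] [Fintype n]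
    [CommSemiring R] (A : Matrix m m R) (B : Matrix m n R) (C : Matrix n m R) (D : Matrix n n R)
    (a : m → R) (b : n → R) :
    Sum.elim a b ⬝ᵥ fromBlocks A B C D *ᵥ Sum.elim a b =
      a ⬝ᵥ A *ᵥ a + a ⬝ᵥ B *ᵥ b + (b ⬝ᵥ C *ᵥ a + b ⬝ᵥ D *ᵥ b) := by
  rw [fromBlocks_mulVec, sumElim_dotProduct_sumElim, dotProduct_add, dotProduct_add,
    Sum.elim_comp_inl, Sum.elim_comp_inr]

section Blocks

variable {m n : Type*} [Fintype m] [Fintype n] [DecidableEq m] [DecidableEq n]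

lemma posSemidef_fromBlocks_smul_one_of_opNorm_le (Z : Matrix m n ℝ) {c : ℝ}
    (hZ : opNorm Z ≤ c) :
    (fromBlocks (c • (1 : Matrix m m ℝ)) Z Zᵀ (c • 1)).PosSemidef := by
  have hc : 0 ≤ c := (opNorm_nonneg Z).trans hZ
  refine posSemidef_iff_dotProduct_mulVec.mpr ⟨?_, fun x => ?_⟩
  · simp [IsHermitian, conjTranspose_eq_transpose_of_trivial, fromBlocks_transpose]
  rw [star_trivial, ← Sum.elim_comp_inl_inr x, sumElim_dotProduct_fromBlocks_mulVec_sumElim]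
  set a := x ∘ Sum.inl
  set b := x ∘ Sum.inr
  have hZb : |a ⬝ᵥ Z *ᵥ b| ≤ c * ‖toLp 2 a‖ * ‖toLp 2 b‖ :=
    (abs_dotProduct_mulVec_le_opNorm Z a b).trans (by gcongr)
  have hZt : b ⬝ᵥ Zᵀ *ᵥ a = a ⬝ᵥ Z *ᵥ b := by
    rw [dotProduct_mulVec, vecMul_transpose, dotProduct_comm]
  simp only [smul_mulVec, one_mulVec, dotProduct_smul, smul_eq_mul,
    dotProduct_self_eq_norm_toLp_sq, hZt]
  nlinarith [neg_abs_le (a ⬝ᵥ Z *ᵥ b), mul_nonneg hc (sq_nonneg (‖toLp 2 a‖ - ‖toLp 2 b‖))]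

lemma posSemidef_fromBlocks_of_opNorm_le (S : Matrix m m ℝ) (T : Matrix n n ℝ)
    {Z : Matrix m n ℝ} {c : ℝ} (hZ : opNorm Z ≤ c) :
    (fromBlocks (c • (S * Sᵀ)) (S * Z * Tᵀ) (S * Z * Tᵀ)ᵀ (c • (T * Tᵀ))).PosSemidef := by
  convert (posSemidef_fromBlocks_smul_one_of_opNorm_le Z hZ).mul_mul_conjTranspose_same
    (fromBlocks S 0 0 T) using 1
  simp [conjTranspose_eq_transpose_of_trivial, fromBlocks_transpose, fromBlocks_multiply,
    transpose_mul, Matrix.mul_assoc]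

end Blocks

open MatrixOrder in
lemma invSqrt_eq_inv_sqrt {n : Type*} [Fintype n] [DecidableEq n] {A : Matrix n n ℝ}
    (hA : A.PosSemidef) : invSqrt A = (CFC.sqrt A)⁻¹ := by
  rw [invSqrt, dif_pos hA, CFC.sqrt_eq_cfc, cfc_nnreal_eq_real _ A, hA.1.cfc_eq, IsHermitian.cfc,
    Unitary.conjStarAlgAut_apply]
  simp [Function.comp_def, max_eq_left (hA.eigenvalues_nonneg _)]

open MatrixOrder in
lemma posSemidef_fromBlocks_smul_of_opNorm_invSqrt_le {m n : Type*} [Fintype m]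
    [Fintype n] [DecidableEq m] [DecidableEq n] {V : Matrix m m ℝ} {W : Matrix n n ℝ}
    (hV : V.PosDef) (hW : W.PosDef) {B : Matrix m n ℝ} {c : ℝ}
    (hB : opNorm (invSqrt V * B * invSqrt W) ≤ c) :
    (fromBlocks (c • V) B Bᵀ (c • W)).PosSemidef := by
  rw [invSqrt_eq_inv_sqrt hV.posSemidef, invSqrt_eq_inv_sqrt hW.posSemidef] at hB
  set S := CFC.sqrt V
  set T := CFC.sqrt W
  have hS : Sᵀ = S := (CFC.sqrt_nonneg V).posSemidef.1
  have hT : Tᵀ = T := (CFC.sqrt_nonneg W).posSemidef.1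
  have hSu : IsUnit S.det := (isUnit_iff_isUnit_det S).mp <|
    (CFC.isUnit_sqrt_iff V hV.posSemidef.nonneg).mpr hV.isUnit
  have hTu : IsUnit T.det := (isUnit_iff_isUnit_det T).mp <|
    (CFC.isUnit_sqrt_iff W hW.posSemidef.nonneg).mpr hW.isUnit
  have hBZ : S * (S⁻¹ * B * T⁻¹) * Tᵀ = B := by
    rw [hT, Matrix.mul_assoc S, nonsing_inv_mul_cancel_right (h := hTu),
      mul_nonsing_inv_cancel_left (h := hSu)]
  have hVS : S * Sᵀ = V := by rw [hS, CFC.sqrt_mul_sqrt_self V hV.posSemidef.nonneg]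
  have hWT : T * Tᵀ = W := by rw [hT, CFC.sqrt_mul_sqrt_self W hW.posSemidef.nonneg]
  simpa only [hBZ, hVS, hWT] using posSemidef_fromBlocks_of_opNorm_le S T hB

/-- **Loewner sandwich between a block matrix and its block-diagonal part (Lemma D.6).**
If `‖V^{-1/2} B W^{-1/2}‖ ≤ 1/2`, then `(1/2)U ≼ M ≼ 2U`, where `M = [[V,B],[Bᵀ,W]]` and
`U = blockdiag(V,W)`.  `A ≼ B` is expressed as `(B − A).PosSemidef`. -/
theorem loewner_sandwich_block_diagonal
    {d₁ d₂ : ℕ}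
    (V : Matrix (Fin d₁) (Fin d₁) ℝ) (W : Matrix (Fin d₂) (Fin d₂) ℝ)
    (B : Matrix (Fin d₁) (Fin d₂) ℝ)
    (hV : V.PosDef) (hW : W.PosDef)
    (hZ : opNorm (invSqrt V * B * invSqrt W) ≤ 1 / 2) :
    (Matrix.fromBlocks V B Bᵀ W - (1 / 2 : ℝ) • Matrix.fromBlocks V 0 0 W).PosSemidef ∧
    ((2 : ℝ) • Matrix.fromBlocks V 0 0 W - Matrix.fromBlocks V B Bᵀ W).PosSemidef := by
  have hnegB : opNorm (invSqrt V * -B * invSqrt W) ≤ 1 := by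
    rw [Matrix.mul_neg, Matrix.neg_mul, opNorm_neg]
    linarith
  constructor
  · convert posSemidef_fromBlocks_smul_of_opNorm_invSqrt_le hV hW hZ using 1
    ext (i | j) (k | l) <;> simp <;> ring
  · convert posSemidef_fromBlocks_smul_of_opNorm_invSqrt_le hV hW hnegB using 1
    ext (i | j) (k | l) <;> simp <;> ring
end
end

section
/- Refined instantaneous regret bound via the block-diagonal matrix (Lemma B.4 core): Let x̃_i = P(i, x_i, z_i) ∈ ℝ^{d₁+d₂K} for i ∈ {1,…,K} be sparse embeddings of vectors x_i ∈ ℝ^{d₁}, z_i ∈ ℝ^{d₂}. Let M ∈ ℝ^{(d₁+d₂K)×(d₁+d₂K)} be symmetric positive definite and U = blockdiag(V, W₁, …, W_K) with V ∈ ℝ^{d₁×d₁} and each W_i ∈ ℝ^{d₂×d₂} symmetric positive definite, and assume M ≽ (1/2)·U in the Loewner order. Let φ̂, φ* ∈ ℝ^{d₁+d₂K}, γ ≥ 0, assume |⟨x̃_i, φ̂ − φ*⟩| ≤ γ·‖x̃_i‖_{M^{−1}} for every i, and let i_t maximize i ↦ ⟨x̃_i, φ̂⟩ + γ·‖x̃_i‖_{M^{−1}}.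 Then max_j ⟨x̃_j, φ*⟩ − ⟨x̃_{i_t}, φ*⟩ ≤ √8·γ·(‖x_{i_t}‖_{V^{−1}} + ‖z_{i_t}‖_{W_{i_t}^{−1}}). -/
/-! The UCB choice of `i_t` bounds the regret by twice the confidence width
`γ‖x̃_{i_t}‖_{M⁻¹}`. Inversion reverses the Loewner order, so `M ≽ U/2` gives `M⁻¹ ≼ 2U⁻¹`, and
`U⁻¹ = blockdiag(V⁻¹, W₁⁻¹, …, W_K⁻¹)` only sees the two nonzero blocks of the sparse embedding:
`‖x̃_i‖²_{U⁻¹} = ‖x_i‖²_{V⁻¹} + ‖z_i‖²_{W_i⁻¹}`. Finally `√(a² + b²) ≤ a + b` and `2√2 = √8`. -/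

open Matrix

noncomputable section

/-- Index type for the hybrid feature space `ℝ^{d₁+d₂K}`: the first `d₁` coordinates
followed by `K` blocks of `d₂` coordinates (block `i` holding arm `i`'s disjoint part). -/
abbrev HybIdx (d₁ d₂ K : ℕ) := Fin d₁ ⊕ Fin d₂ × Fin K

/-- The sparse embedding `P(i, x, z) ∈ ℝ^{d₁+d₂K}`: `x` in the first `d₁` coordinates,
`z` in the `i`-th block of `d₂` coordinates, and zeros elsewhere. -/
def embed {d₁ d₂ K : ℕ} (i : Fin K) (x : Fin d₁ → ℝ) (z : Fin d₂ → ℝ) :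
    HybIdx d₁ d₂ K → ℝ :=
  Sum.elim x (fun p => if p.2 = i then z p.1 else 0)

/-- The matrix-weighted norm `‖v‖_A = √(vᵀ A v)`. -/
def matNorm {n : Type*} [Fintype n] (A : Matrix n n ℝ) (v : n → ℝ) : ℝ :=
  Real.sqrt (v ⬝ᵥ A.mulVec v)

/-- `blockdiag(V, W₁, …, W_K)` on the hybrid index set. -/
def hybBlockDiag {d₁ d₂ K : ℕ} (V : Matrix (Fin d₁) (Fin d₁) ℝ)
    (W : Fin K → Matrix (Fin d₂) (Fin d₂) ℝ) :
    Matrix (HybIdx d₁ d₂ K) (HybIdx d₁ d₂ K) ℝ :=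
  Matrix.fromBlocks V 0 0 (Matrix.blockDiagonal W)

namespace Matrix

section Blocks

variable {m n o : Type*} [Fintype m] [Fintype n] [Fintype o] [DecidableEq o]

theorem dotProduct_blockDiagonal_mulVec (W : o → Matrix m m ℝ) (b : m × o → ℝ) :
    b ⬝ᵥ blockDiagonal W *ᵥ b = ∑ k, (fun p => b (p, k)) ⬝ᵥ W k *ᵥ fun p => b (p, k) := by
  simp only [dotProduct, mulVec, blockDiagonal_apply, Fintype.sum_prod_type, ite_mul, zero_mul,
    Finset.sum_ite_eq, Finset.mem_univ, if_true, Finset.mul_sum]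
  rw [Finset.sum_comm]

theorem dotProduct_blockDiagonal_mulVec_ite (W : o → Matrix m m ℝ) (i : o) (z : m → ℝ) :
    ((fun p => if p.2 = i then z p.1 else 0) ⬝ᵥ blockDiagonal W *ᵥ
      fun p => if p.2 = i then z p.1 else 0) = z ⬝ᵥ W i *ᵥ z := by
  rw [dotProduct_blockDiagonal_mulVec, Finset.sum_eq_single i (fun k _ hk => by simp [hk])
    (by simp)]
  simp

theorem PosSemidef.blockDiagonal {W : o → Matrix m m ℝ} (hW : ∀ k, (W k).PosSemidef) :
    (blockDiagonal W).PosSemidef := by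
  refine .of_dotProduct_mulVec_nonneg (isHermitian_blockDiagonal_iff.2 fun k => (hW k).1)
    fun b => ?_
  rw [star_trivial, dotProduct_blockDiagonal_mulVec]
  exact Finset.sum_nonneg fun k _ => by simpa using (hW k).dotProduct_mulVec_nonneg _

variable [DecidableEq m] [DecidableEq n]

theorem PosDef.blockDiagonal {W : o → Matrix m m ℝ} (hW : ∀ k, (W k).PosDef) :
    (blockDiagonal W).PosDef := by
  refine (PosSemidef.blockDiagonal fun k => (hW k).posSemidef).posDef_iff_det_ne_zero.2 ?_
  rw [det_blockDiagonal]
  exact Finset.prod_ne_zero_iff.2 fun k _ => (hW k).det_pos.ne'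

theorem PosDef.fromBlocks_zero {A : Matrix m m ℝ} {D : Matrix n n ℝ} (hA : A.PosDef)
    (hD : D.PosDef) : (fromBlocks A 0 0 D).PosDef := by
  have hPSD : (fromBlocks A 0 0 D).PosSemidef := by
    let := hA.isUnit.invertible
    simpa using (PosDef.fromBlocks₁₁ (0 : Matrix m n ℝ) D hA).2 (by simpa using hD.posSemidef)
  refine hPSD.posDef_iff_det_ne_zero.2 ?_
  rw [det_fromBlocks_zero₁₂]
  exact mul_ne_zero hA.det_pos.ne' hD.det_pos.ne'

theorem inv_blockDiagonal {W : o → Matrix m m ℝ} (hW : ∀ k, IsUnit (W k)) :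
    (blockDiagonal W)⁻¹ = blockDiagonal fun k => (W k)⁻¹ := by
  refine inv_eq_right_inv ?_
  rw [← blockDiagonal_mul]
  simp_rw [mul_nonsing_inv _ ((isUnit_iff_isUnit_det _).1 (hW _))]
  exact blockDiagonal_one

theorem inv_fromBlocks_zero {A : Matrix m m ℝ} {D : Matrix n n ℝ} (hA : IsUnit A)
    (hD : IsUnit D) : (fromBlocks A 0 0 D)⁻¹ = fromBlocks A⁻¹ 0 0 D⁻¹ := by
  simpa using inv_fromBlocks_zero₁₂_of_isUnit_iff A 0 D (iff_of_true hA hD)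

end Blocks

theorem PosDef.dotProduct_inv_mulVec_le {m : Type*} [Fintype m] [DecidableEq m]
    {A B : Matrix m m ℝ} (hA : A.PosDef) (hAB : (B - A).PosSemidef) (v : m → ℝ) :
    v ⬝ᵥ B⁻¹ *ᵥ v ≤ v ⬝ᵥ A⁻¹ *ᵥ v := by
  have hB : B.PosDef := by simpa using PosDef.posSemidef_add hAB hA
  set w := B⁻¹ *ᵥ v
  set y := A⁻¹ *ᵥ v
  have hBw : B *ᵥ w = v := by
    rw [mulVec_mulVec, mul_nonsing_inv _ ((isUnit_iff_isUnit_det _).1 hB.isUnit), one_mulVec]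
  have hAy : A *ᵥ y = v := by
    rw [mulVec_mulVec, mul_nonsing_inv _ ((isUnit_iff_isUnit_det _).1 hA.isUnit), one_mulVec]
  have hAw : w ⬝ᵥ A *ᵥ w ≤ w ⬝ᵥ v := by
    have := hAB.dotProduct_mulVec_nonneg w
    rw [star_trivial, sub_mulVec, dotProduct_sub, hBw] at this
    linarith
  have hyAw : y ⬝ᵥ A *ᵥ w = v ⬝ᵥ w := by
    rw [dotProduct_mulVec, ← mulVec_transpose, ← conjTranspose_eq_transpose_of_trivial,
      hA.isHermitian.eq, hAy]
  -- `0 ≤ (w - y) ⬝ A (w - y)` with `A y = v = B w` and `w ⬝ A w ≤ w ⬝ B w`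
  have hsq := hA.posSemidef.dotProduct_mulVec_nonneg (w - y)
  rw [star_trivial, mulVec_sub, hAy, dotProduct_sub, sub_dotProduct, sub_dotProduct, hyAw]
    at hsq
  linarith [dotProduct_comm w v, dotProduct_comm y v]

end Matrix

theorem ciSup_sub_le_two_mul_of_ucb {ι : Type*} {reward estimate width : ι → ℝ}
    (hconf : ∀ i, |estimate i - reward i| ≤ width i) (it : ι)
    (hit : ∀ i, estimate i + width i ≤ estimate it + width it) :
    (⨆ j, reward j) - reward it ≤ 2 * width it := by
  have : Nonempty ι := ⟨it⟩
  refine sub_le_iff_le_add'.2 (ciSup_le fun j => ?_)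
  have hconf_j := abs_le.1 (hconf j)
  have hconf_it := abs_le.1 (hconf it)
  linarith [hit j]

theorem matNorm_inv_le_sqrt_two_mul {n : Type*} [Fintype n] [DecidableEq n]
    {A B : Matrix n n ℝ} (hA : A.PosDef) (hAB : (B - (1 / 2 : ℝ) • A).PosSemidef) (v : n → ℝ) :
    matNorm B⁻¹ v ≤ √2 * matNorm A⁻¹ v := by
  have hinv : ((1 / 2 : ℝ) • A)⁻¹ = (2 : ℝ) • A⁻¹ := by
    refine inv_eq_right_inv ?_
    rw [smul_mul_smul_comm, mul_nonsing_inv _ ((isUnit_iff_isUnit_det _).1 hA.isUnit)]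
    norm_num
  have hle := (hA.smul (by norm_num : (0 : ℝ) < 1 / 2)).dotProduct_inv_mulVec_le hAB v
  rw [hinv, smul_mulVec, dotProduct_smul, smul_eq_mul] at hle
  rw [matNorm, matNorm, ← Real.sqrt_mul zero_le_two]
  exact Real.sqrt_le_sqrt hle

theorem embed_dotProduct_hybBlockDiag_mulVec_embed {d₁ d₂ K : ℕ}
    (V : Matrix (Fin d₁) (Fin d₁) ℝ) (W : Fin K → Matrix (Fin d₂) (Fin d₂) ℝ) (i : Fin K)
    (x : Fin d₁ → ℝ) (z : Fin d₂ → ℝ) :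
    embed i x z ⬝ᵥ hybBlockDiag V W *ᵥ embed i x z = x ⬝ᵥ V *ᵥ x + z ⬝ᵥ W i *ᵥ z := by
  rw [embed, hybBlockDiag, fromBlocks_mulVec, sumElim_dotProduct_sumElim]
  simp [dotProduct_blockDiagonal_mulVec_ite]

theorem matNorm_hybBlockDiag_embed_le {d₁ d₂ K : ℕ} {V : Matrix (Fin d₁) (Fin d₁) ℝ}
    {W : Fin K → Matrix (Fin d₂) (Fin d₂) ℝ} (hV : V.PosSemidef) (hW : ∀ i, (W i).PosSemidef)
    (i : Fin K) (x : Fin d₁ → ℝ) (z : Fin d₂ → ℝ) :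
    matNorm (hybBlockDiag V W) (embed i x z) ≤ matNorm V x + matNorm (W i) z := by
  have hx := Real.sq_sqrt (by simpa using hV.dotProduct_mulVec_nonneg x)
  have hz := Real.sq_sqrt (by simpa using (hW i).dotProduct_mulVec_nonneg z)
  unfold matNorm
  rw [embed_dotProduct_hybBlockDiag_mulVec_embed,
    Real.sqrt_le_left (add_nonneg (Real.sqrt_nonneg _) (Real.sqrt_nonneg _))]
  nlinarith [mul_nonneg (Real.sqrt_nonneg (x ⬝ᵥ V *ᵥ x)) (Real.sqrt_nonneg (z ⬝ᵥ W i *ᵥ z))]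

theorem inv_hybBlockDiag {d₁ d₂ K : ℕ} {V : Matrix (Fin d₁) (Fin d₁) ℝ}
    {W : Fin K → Matrix (Fin d₂) (Fin d₂) ℝ} (hV : V.PosDef) (hW : ∀ i, (W i).PosDef) :
    (hybBlockDiag V W)⁻¹ = hybBlockDiag V⁻¹ fun i => (W i)⁻¹ := by
  rw [hybBlockDiag, inv_fromBlocks_zero hV.isUnit (PosDef.blockDiagonal hW).isUnit,
    inv_blockDiagonal fun i => (hW i).isUnit, hybBlockDiag]

theorem refined_instantaneous_regret_block_diagonal_general
    {d₁ d₂ K : ℕ}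
    (x : Fin K → Fin d₁ → ℝ) (z : Fin K → Fin d₂ → ℝ)
    (M : Matrix (HybIdx d₁ d₂ K) (HybIdx d₁ d₂ K) ℝ)
    (V : Matrix (Fin d₁) (Fin d₁) ℝ) (hV : V.PosDef)
    (W : Fin K → Matrix (Fin d₂) (Fin d₂) ℝ) (hW : ∀ i, (W i).PosDef)
    (hMU : (M - (1 / 2 : ℝ) • hybBlockDiag V W).PosSemidef)
    (phiHat phiStar : HybIdx d₁ d₂ K → ℝ) (γ : ℝ) (hγ : 0 ≤ γ)
    (hconf : ∀ i : Fin K,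
      |embed i (x i) (z i) ⬝ᵥ (phiHat - phiStar)| ≤ γ * matNorm M⁻¹ (embed i (x i) (z i)))
    (it : Fin K)
    (hit : ∀ i : Fin K,
      embed i (x i) (z i) ⬝ᵥ phiHat + γ * matNorm M⁻¹ (embed i (x i) (z i))
        ≤ embed it (x it) (z it) ⬝ᵥ phiHat + γ * matNorm M⁻¹ (embed it (x it) (z it))) :
    (⨆ j : Fin K, embed j (x j) (z j) ⬝ᵥ phiStar) - embed it (x it) (z it) ⬝ᵥ phiStar
      ≤ Real.sqrt 8 * γ * (matNorm V⁻¹ (x it) + matNorm (W it)⁻¹ (z it)) := by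
  have hregret := ciSup_sub_le_two_mul_of_ucb (reward := fun i => embed i (x i) (z i) ⬝ᵥ phiStar)
    (fun i => by simpa only [dotProduct_sub] using hconf i) it hit
  have hwidth : matNorm M⁻¹ (embed it (x it) (z it))
      ≤ √2 * (matNorm V⁻¹ (x it) + matNorm (W it)⁻¹ (z it)) := by
    calc _ ≤ √2 * matNorm (hybBlockDiag V W)⁻¹ (embed it (x it) (z it)) :=
          matNorm_inv_le_sqrt_two_mul (PosDef.fromBlocks_zero hV (PosDef.blockDiagonal hW)) hMU _
      _ ≤ _ := by
          rw [inv_hybBlockDiag hV hW]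
          gcongr
          exact matNorm_hybBlockDiag_embed_le hV.inv.posSemidef (fun i => (hW i).inv.posSemidef) ..
  have hsqrt8 : √8 = 2 * √2 := by
    rw [show (8 : ℝ) = 2 ^ 2 * 2 by norm_num, Real.sqrt_mul (by positivity),
      Real.sqrt_sq zero_le_two]
  calc _ ≤ 2 * (γ * matNorm M⁻¹ (embed it (x it) (z it))) := hregret
    _ ≤ 2 * (γ * (√2 * (matNorm V⁻¹ (x it) + matNorm (W it)⁻¹ (z it)))) := by gcongr
    _ = _ := by rw [hsqrt8]; ring

/-- **Refined instantaneous regret bound via the block-diagonal matrix (Lemma B.4 core).**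
If `M ≽ (1/2)·blockdiag(V, W₁, …, W_K)`, the per-arm estimation errors are bounded by
`γ‖x̃_i‖_{M⁻¹}` and `i_t` maximizes the UCB index, then the instantaneous regret is at most
`√8·γ·(‖x_{i_t}‖_{V⁻¹} + ‖z_{i_t}‖_{W_{i_t}⁻¹})`. -/
theorem refined_instantaneous_regret_block_diagonal
    {d₁ d₂ K : ℕ} (hK : 1 ≤ K)
    (x : Fin K → Fin d₁ → ℝ) (z : Fin K → Fin d₂ → ℝ)
    (M : Matrix (HybIdx d₁ d₂ K) (HybIdx d₁ d₂ K) ℝ) (hM : M.PosDef)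
    (V : Matrix (Fin d₁) (Fin d₁) ℝ) (hV : V.PosDef)
    (W : Fin K → Matrix (Fin d₂) (Fin d₂) ℝ) (hW : ∀ i, (W i).PosDef)
    (hMU : (M - (1 / 2 : ℝ) • hybBlockDiag V W).PosSemidef)
    (phiHat phiStar : HybIdx d₁ d₂ K → ℝ) (γ : ℝ) (hγ : 0 ≤ γ)
    (hconf : ∀ i : Fin K,
      |embed i (x i) (z i) ⬝ᵥ (phiHat - phiStar)| ≤ γ * matNorm M⁻¹ (embed i (x i) (z i)))
    (it : Fin K)
    (hit : ∀ i : Fin K,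
      embed i (x i) (z i) ⬝ᵥ phiHat + γ * matNorm M⁻¹ (embed i (x i) (z i))
        ≤ embed it (x it) (z it) ⬝ᵥ phiHat + γ * matNorm M⁻¹ (embed it (x it) (z it))) :
    (⨆ j : Fin K, embed j (x j) (z j) ⬝ᵥ phiStar) - embed it (x it) (z it) ⬝ᵥ phiStar
      ≤ Real.sqrt 8 * γ * (matNorm V⁻¹ (x it) + matNorm (W it)⁻¹ (z it)) :=
  refined_instantaneous_regret_block_diagonal_general x z M V hV W hW hMU phiHat phiStar γ hγ hconf
    it hit
end
end
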